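/- (KKT characterization of the minimizer) Let μ be a nonzero finite Borel measure on ℝ^d with compact support, λ ≥ 0, and u ∈ L²(μ;ℝ^d). Then u = u_{μ,λ} if and only if there exists w ∈ L^∞(μ⊗μ; ℝ^d) such that, for μ-a.e. x, y ∈ ℝ^d: w(x,y) = −w(y,x); if u(x) ≠ u(y) then w(x,y) = sgn(u(x)−u(y)); |w(x,y)| ≤ 1; and x − u(x) = λ ∫ w(x,z) dμ(z). -/

import Mathlib

open MeasureTheory Filter Topology ProbabilityTheory
open scoped ENNReal NNReal symmDiff Classical RealInnerProductSpace

noncomputable section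

/-- `d`-dimensional Euclidean space. -/
abbrev Euc (d : ℕ) : Type := EuclideanSpace ℝ (Fin d)

/-- The sum-of-norms clustering functional
`J_{μ,λ}(u) = ∫ |u x - x|² dμ + λ ∬ |u x - u y| dμ dμ`. -/
def SONJ {d : ℕ} (μ : Measure (Euc d)) (lam : ℝ) (u : Euc d → Euc d) : ℝ :=
  ∫ x, ‖u x - x‖ ^ 2 ∂μ + lam * ∫ x, ∫ y, ‖u x - u y‖ ∂μ ∂μ

/-- `u` is a minimizer of `J_{μ,λ}` over `L²(μ; ℝ^d)`.  Since `J_{μ,λ}` has a unique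
minimizer (up to `μ`-a.e. equality), this predicate characterizes `u_{μ,λ}`. -/
def IsSONMin {d : ℕ} (μ : Measure (Euc d)) (lam : ℝ) (u : Euc d → Euc d) : Prop :=
  MemLp u 2 μ ∧ ∀ v : Euc d → Euc d, MemLp v 2 μ → SONJ μ lam u ≤ SONJ μ lam v

/-- `μ` is `λ`-cohesive: the minimizer of `J_{μ,λ}` is `μ`-a.e. constant. -/
def Cohesive {d : ℕ} (μ : Measure (Euc d)) (lam : ℝ) : Prop :=
  ∃ u : Euc d → Euc d, IsSONMin μ lam u ∧ ∃ c : Euc d, u =ᵐ[μ] fun _ => c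

/-- `μ` is `λ`-shattered: the minimizer of `J_{μ,λ}` agrees `μ`-a.e. with a measurable
injection. -/
def Shattered {d : ℕ} (μ : Measure (Euc d)) (lam : ℝ) : Prop :=
  ∃ u : Euc d → Euc d, IsSONMin μ lam u ∧
    ∃ v : Euc d → Euc d, Measurable v ∧ Function.Injective v ∧ u =ᵐ[μ] v

/-- `λ₁(μ) = inf {λ ≥ 0 | μ is λ-cohesive}`. -/
def lambda1 {d : ℕ} (μ : Measure (Euc d)) : ℝ :=
  sInf {lam : ℝ | 0 ≤ lam ∧ Cohesive μ lam}

/-- `λ⋆(μ) = sup {λ ≥ 0 | μ is λ-shattered}`. -/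
def lambdaStar {d : ℕ} (μ : Measure (Euc d)) : ℝ :=
  sSup {lam : ℝ | 0 ≤ lam ∧ Shattered μ lam}

/-- The level set (cluster) of `u` containing `x`: `V_{u,x} = u⁻¹({u x})`. -/
def Vset {d : ℕ} (u : Euc d → Euc d) (x : Euc d) : Set (Euc d) := {y | u y = u x}

/-- The `μ`-centroid of a set `V`: the `μ`-average of `V` if `μ V > 0`, and the unique
element of `V` if `V` is a singleton (otherwise junk). -/
def muCentroid {d : ℕ} (μ : Measure (Euc d)) (V : Set (Euc d)) : Euc d :=
  if 0 < μ V then (μ V).toReal⁻¹ • ∫ x in V, x ∂μ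
  else if h : ∃ x, V = {x} then h.choose else 0

/-- The first canonical basis vector of `ℝ^d`. -/
def e1 (d : ℕ) : Euc d := if h : 0 < d then EuclideanSpace.single (⟨0, h⟩ : Fin d) 1 else 0

/-- The constant `γ_d` from the paper. -/
def gammaD (d : ℕ) : ℝ :=
  ((2 * (d : ℝ) + 1) / (2 * (d : ℝ) + 4)) *
    (if Even d then
      (((d : ℝ) + 1) * ((Nat.factorial (2 * d) : ℝ)) * Real.pi) /
        (2 ^ (3 * d) * ((Nat.factorial (d / 2) : ℝ)) ^ 2 * ((Nat.factorial d : ℝ)))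
    else
      (((d : ℝ) + 1) * ((Nat.factorial ((d - 1) / 2) : ℝ)) ^ 2 *
          ((Nat.factorial (2 * d) : ℝ))) /
        (2 ^ d * ((Nat.factorial d : ℝ)) ^ 3))

/-- The union of the two open unit balls centered at `± r e₁`. -/
def ballUnion (d : ℕ) (r : ℝ) : Set (Euc d) :=
  Metric.ball (-(r • e1 d)) 1 ∪ Metric.ball (r • e1 d) 1

/-- The empirical measure `μ_N = N⁻¹ ∑_{n<N} δ_{X n ω}`. -/
def empMeas {d : ℕ} {Ω : Type*} (X : ℕ → Ω → Euc d) (N : ℕ) (ω : Ω) : Measure (Euc d) :=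
  (N : ℝ≥0∞)⁻¹ • ∑ n ∈ Finset.range N, Measure.dirac (X n ω)

/-- `sgn(z) = z / |z|` (junk value `0` at `z = 0`). -/
def sgnE {d : ℕ} (z : Euc d) : Euc d := ‖z‖⁻¹ • z

/-!
Sufficiency is convex duality. For `v = u + g`, the subgradient inequality of the norm at
`u x - u y` with multiplier `w x y`, integrated and symmetrised with the antisymmetry of `w`, gives
`J(v) ≥ J(u) + 2 ∫ ⟪u x - x + λ ∫ w x z dμ(z), g x⟫ dμ(x) = J(u)`.

For necessity, the one-sided derivative of `J` at a minimiser `u` in a direction `h` is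
nonnegative: `⟪x - u, h⟫ ≤ λ ∬ ⟪s_h(x, y), h x⟫`, where `s_h(x, y)` is the subgradient of the norm
at `u x - u y` that is extremal in the direction `h x - h y`. Every `s_h` is an admissible
multiplier, so `x - u` cannot be strictly separated from the image of the set `M` of admissible
multipliers under `T w = λ ∫ w(·, z) dμ(z)`. As `M` is closed, convex and bounded in the Hilbert
space `L²(μ ⊗ μ)`, it is weakly compact, so `T(M)` is closed and convex, and Hahn–Banach gives
`x - u ∈ T(M)`.
-/

open Bornology

section WeakCompactness

variable {E F : Type*} [NormedAddCommGroup E] [InnerProductSpace ℝ E] [CompleteSpace E]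

theorem range_inclusionInDoubleDualWeak_eq_univ :
    Set.range (NormedSpace.inclusionInDoubleDualWeak ℝ E) = Set.univ := by
  refine Set.eq_univ_of_forall fun φ => ?_
  let ψ : StrongDual ℝ E := (φ : StrongDual ℝ (StrongDual ℝ E)).comp
    (InnerProductSpace.toDual ℝ E).toContinuousLinearEquiv.toContinuousLinearMap
  refine ⟨toWeakSpace ℝ E ((InnerProductSpace.toDual ℝ E).symm ψ), ?_⟩
  refine ContinuousLinearMap.ext fun f => ?_
  obtain ⟨y, rfl⟩ := (InnerProductSpace.toDual ℝ E).surjective f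
  simp only [NormedSpace.inclusionInDoubleDualWeak_apply_apply]
  rw [InnerProductSpace.toDual_apply_apply, LinearEquiv.symm_apply_apply, real_inner_comm,
    InnerProductSpace.toDual_symm_apply]
  rfl

theorem isCompact_toWeakSpace_image {K : Set E} (hKc : Convex ℝ K) (hK : IsClosed K)
    (hKb : IsBounded K) : IsCompact (toWeakSpace ℝ E '' K) := by
  have hcl : closure (toWeakSpace ℝ E '' K) = toWeakSpace ℝ E '' K := by
    rw [← hKc.toWeakSpace_closure ℝ, hK.closure_eq]
  rw [← hcl]
  refine NormedSpace.isCompact_closure_of_isBounded ℝ E _ ?_ ?_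
  · simpa [Set.preimage_image_eq _ (toWeakSpace ℝ E).injective] using hKb
  · rw [range_inclusionInDoubleDualWeak_eq_univ]
    exact Set.subset_univ _

variable [NormedAddCommGroup F]

theorem ContinuousLinearMap.isClosed_image_of_convex_of_isBounded [NormedSpace ℝ F]
    (T : E →L[ℝ] F) {K : Set E} (hKc : Convex ℝ K) (hK : IsClosed K) (hKb : IsBounded K) :
    IsClosed (T '' K) := by
  have hcpt := (isCompact_toWeakSpace_image hKc hK hKb).image (WeakSpace.map T).continuous
  convert hcpt.isClosed.preimage (toWeakSpaceCLM ℝ F).continuous using 1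
  ext y
  exact ⟨fun ⟨x, hx, h⟩ => ⟨x, ⟨x, hx, rfl⟩, h⟩, fun ⟨_, ⟨x, hx, rfl⟩, h⟩ => ⟨x, hx, h⟩⟩

theorem ContinuousLinearMap.mem_image_of_forall_exists_inner_le [InnerProductSpace ℝ F]
    [CompleteSpace F] (T : E →L[ℝ] F) {K : Set E} (hKc : Convex ℝ K) (hK : IsClosed K)
    (hKb : IsBounded K) {b : F} (hb : ∀ h, ∃ W ∈ K, ⟪b, h⟫ ≤ ⟪T W, h⟫) : b ∈ T '' K := by
  by_contra hbK
  obtain ⟨f, c, hfb, hfK⟩ := geometric_hahn_banach_point_closed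
    (hKc.linear_image T.toLinearMap) (T.isClosed_image_of_convex_of_isBounded hKc hK hKb) hbK
  obtain ⟨W, hW, hle⟩ := hb (-(InnerProductSpace.toDual ℝ F).symm f)
  simp only [inner_neg_right, real_inner_comm ((InnerProductSpace.toDual ℝ F).symm f),
    InnerProductSpace.toDual_symm_apply] at hle
  linarith [(hfK (T W) ⟨W, hW, rfl⟩ : c < f (T W))]

end WeakCompactness

namespace MeasureTheory.Lp

variable {α β E : Type*} [MeasurableSpace α] [MeasurableSpace β] [NormedAddCommGroup E]
  {μ : Measure α}

section AeMem

variable {p : ℝ≥0∞} {S : α → Set E}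

theorem convex_setOf_ae_mem [NormedSpace ℝ E] (hS : ∀ a, Convex ℝ (S a)) :
    Convex ℝ {f : Lp E p μ | ∀ᵐ a ∂μ, f a ∈ S a} := by
  intro f hf g hg s t hs ht hst
  filter_upwards [hf, hg, Lp.coeFn_add (s • f) (t • g), Lp.coeFn_smul s f, Lp.coeFn_smul t g]
    with a hfa hga hadd hsf htg
  rw [hadd, Pi.add_apply, hsf, htg]
  exact hS a hfa hga hs ht hst

theorem isClosed_setOf_ae_mem [Fact (1 ≤ p)] (hS : ∀ a, IsClosed (S a)) :
    IsClosed {f : Lp E p μ | ∀ᵐ a ∂μ, f a ∈ S a} := by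
  refine isSeqClosed_iff_isClosed.mp fun F f hF hFf => ?_
  obtain ⟨ns, -, hae⟩ := (tendstoInMeasure_of_tendsto_Lp hFf).exists_seq_tendsto_ae
  filter_upwards [hae, ae_all_iff.2 fun i => hF (ns i)] with a hlim hmem
  exact (hS a).mem_of_tendsto hlim (Eventually.of_forall hmem)

end AeMem

section CompFst

variable (μ) (ν : Measure β) [IsFiniteMeasure ν]

theorem norm_toLp_comp_fst (h : Lp E 2 μ) :
    ‖((Lp.memLp h).comp_fst ν).toLp‖ = (ν Set.univ).toReal.sqrt * ‖h‖ := by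
  have hmap : eLpNorm (fun p : α × β => h p.1) 2 (μ.prod ν) = eLpNorm h 2 (ν Set.univ • μ) := by
    rw [← Measure.map_fst_prod, eLpNorm_map_measure _ measurable_fst.aemeasurable]
    · rfl
    · rw [Measure.map_fst_prod]
      exact (Lp.aestronglyMeasurable h).smul_measure _
  rw [Lp.norm_toLp, hmap, eLpNorm_smul_measure_of_ne_top ENNReal.ofNat_ne_top, smul_eq_mul,
    ENNReal.toReal_mul, ← ENNReal.toReal_rpow, Lp.norm_def, Real.sqrt_eq_rpow]
  norm_num

variable [NormedSpace ℝ E]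

def compFst : Lp E 2 μ →L[ℝ] Lp E 2 (μ.prod ν) :=
  LinearMap.mkContinuous
    { toFun := fun h => ((Lp.memLp h).comp_fst ν).toLp
      map_add' := fun h₁ h₂ => by
        rw [← MemLp.toLp_add]
        exact MemLp.toLp_congr _ _ (Measure.quasiMeasurePreserving_fst.ae_eq (Lp.coeFn_add h₁ h₂))
      map_smul' := fun c h => by
        rw [RingHom.id_apply, ← MemLp.toLp_const_smul]
        exact MemLp.toLp_congr _ _ (Measure.quasiMeasurePreserving_fst.ae_eq (Lp.coeFn_smul c h)) }
    (ν Set.univ).toReal.sqrt fun h => (norm_toLp_comp_fst μ ν h).le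

variable {μ ν}

theorem coeFn_compFst (h : Lp E 2 μ) : compFst μ ν h =ᵐ[μ.prod ν] fun p => h p.1 :=
  MemLp.coeFn_toLp ((Lp.memLp h).comp_fst ν)

end CompFst

end MeasureTheory.Lp

section InnerProductIntegrals

variable {α β E : Type*} [MeasurableSpace α] [MeasurableSpace β] {μ : Measure α} {ν : Measure β}
  [NormedAddCommGroup E] [InnerProductSpace ℝ E]

theorem integrable_inner_of_ae_norm_le {W f : α → E} {C : ℝ} (hW : AEStronglyMeasurable W μ)
    (hWC : ∀ᵐ a ∂μ, ‖W a‖ ≤ C) (hf : Integrable f μ) : Integrable (fun a => ⟪W a, f a⟫) μ := by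
  refine (hf.norm.const_mul C).mono' (hW.inner hf.1) ?_
  filter_upwards [hWC] with a ha
  calc ‖⟪W a, f a⟫‖ ≤ ‖W a‖ * ‖f a‖ := norm_inner_le_norm _ _
    _ ≤ C * ‖f a‖ := by gcongr

theorem MeasureTheory.MemLp.integrable_inner {f g : α → E} (hf : MemLp f 2 μ) (hg : MemLp g 2 μ) :
    Integrable (fun a => ⟪f a, g a⟫) μ := by
  refine (L2.integrable_inner (𝕜 := ℝ) (hf.toLp f) (hg.toLp g)).congr ?_
  filter_upwards [hf.coeFn_toLp, hg.coeFn_toLp] with a hfa hga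
  rw [hfa, hga]

theorem integral_norm_sq_add_smul {f g : α → E} (hf : MemLp f 2 μ) (hg : MemLp g 2 μ) (t : ℝ) :
    ∫ a, ‖f a + t • g a‖ ^ 2 ∂μ
      = ∫ a, ‖f a‖ ^ 2 ∂μ + t * (2 * ∫ a, ⟪f a, g a⟫ ∂μ + t * ∫ a, ‖g a‖ ^ 2 ∂μ) := by
  have hff := (memLp_two_iff_integrable_sq_norm hf.1).1 hf
  have hgg := (memLp_two_iff_integrable_sq_norm hg.1).1 hg
  have hfg := hf.integrable_inner hg
  have hpt : ∀ a, ‖f a + t • g a‖ ^ 2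
      = ‖f a‖ ^ 2 + (t * 2) * ⟪f a, g a⟫ + t ^ 2 * ‖g a‖ ^ 2 := fun a => by
    rw [norm_add_sq_real, real_inner_smul_right, norm_smul, Real.norm_eq_abs, mul_pow, sq_abs]
    ring
  have h12 : Integrable (fun a => ‖f a‖ ^ 2 + (t * 2) * ⟪f a, g a⟫) μ := hff.add (hfg.const_mul _)
  simp only [hpt]
  rw [integral_add h12 (hgg.const_mul _), integral_add hff (hfg.const_mul _), integral_const_mul,
    integral_const_mul]
  ring

theorem integral_inner_sub_eq_two_mul_of_antisymm [SFinite μ] {W : α × α → E} {g : α → E}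
    (hW : ∀ᵐ p ∂μ.prod μ, W p = -W p.swap)
    (hWg : Integrable (fun p => ⟪W p, g p.1⟫) (μ.prod μ)) :
    ∫ p, ⟪W p, g p.1 - g p.2⟫ ∂μ.prod μ = 2 * ∫ p, ⟪W p, g p.1⟫ ∂μ.prod μ := by
  have hswap : (fun p => ⟪W p, g p.2⟫) =ᵐ[μ.prod μ] fun p => -⟪W p.swap, g p.swap.1⟫ := by
    filter_upwards [hW] with p hp
    rw [hp, inner_neg_left, Prod.fst_swap]
  have hWg' : Integrable (fun p => ⟪W p, g p.2⟫) (μ.prod μ) :=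
    (hWg.swap.neg).congr hswap.symm
  simp only [inner_sub_right]
  rw [integral_sub hWg hWg', integral_congr_ae hswap, integral_neg,
    integral_prod_swap (fun p => ⟪W p, g p.1⟫)]
  ring

variable [SFinite ν]

theorem memLp_integral_prod_right_of_ae_norm_le [IsFiniteMeasure μ] [IsFiniteMeasure ν]
    {W : α × β → E} {C : ℝ} (hW : AEStronglyMeasurable W (μ.prod ν))
    (hWC : ∀ᵐ p ∂μ.prod ν, ‖W p‖ ≤ C) (p : ℝ≥0∞) :
    MemLp (fun x => ∫ y, W (x, y) ∂ν) p μ := by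
  refine MemLp.of_bound hW.integral_prod_right' (C * ν.real Set.univ) ?_
  filter_upwards [Measure.ae_ae_of_ae_prod hWC] with x hx
  exact norm_integral_le_of_norm_le_const hx

variable [CompleteSpace E] [SFinite μ]

theorem integral_inner_comp_fst {W : α × β → E} {g : α → E}
    (hW : Integrable W (μ.prod ν)) (hWg : Integrable (fun p => ⟪W p, g p.1⟫) (μ.prod ν)) :
    ∫ p, ⟪W p, g p.1⟫ ∂μ.prod ν = ∫ x, ⟪∫ y, W (x, y) ∂ν, g x⟫ ∂μ := by
  rw [integral_prod _ hWg]
  refine integral_congr_ae ?_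
  filter_upwards [hW.prod_right_ae] with x hx
  simp only [real_inner_comm (g x)]
  exact integral_inner hx (g x)

theorem MeasureTheory.Lp.adjoint_compFst_ae_eq [IsFiniteMeasure μ] [IsFiniteMeasure ν]
    (W : Lp E 2 (μ.prod ν)) {C : ℝ} (hWC : ∀ᵐ p ∂μ.prod ν, ‖W p‖ ≤ C) :
    (Lp.compFst (E := E) μ ν).adjoint W =ᵐ[μ] fun x => ∫ y, W (x, y) ∂ν := by
  have hf := memLp_integral_prod_right_of_ae_norm_le (Lp.aestronglyMeasurable W) hWC 2
  suffices (Lp.compFst (E := E) μ ν).adjoint W = hf.toLp by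
    rw [this]
    exact hf.coeFn_toLp
  refine ext_inner_right ℝ fun h => ?_
  have hh : Integrable (fun p : α × β => h p.1) (μ.prod ν) :=
    ((Lp.memLp h).comp_fst ν).integrable one_le_two
  rw [ContinuousLinearMap.adjoint_inner_left, L2.inner_def, L2.inner_def]
  calc ∫ p, ⟪W p, Lp.compFst μ ν h p⟫ ∂μ.prod ν = ∫ p, ⟪W p, h p.1⟫ ∂μ.prod ν := by
        refine integral_congr_ae ?_
        filter_upwards [Lp.coeFn_compFst h] with p hp
        rw [hp]
    _ = ∫ x, ⟪∫ y, W (x, y) ∂ν, h x⟫ ∂μ :=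
        integral_inner_comp_fst ((Lp.memLp W).integrable one_le_two)
          (integrable_inner_of_ae_norm_le (Lp.aestronglyMeasurable W) hWC hh)
    _ = ∫ x, ⟪(hf.toLp : Lp E 2 μ) x, h x⟫ ∂μ := by
        refine integral_congr_ae ?_
        filter_upwards [hf.coeFn_toLp] with x hx
        rw [hx]

end InnerProductIntegrals

lemma hasDerivAt_norm_add_smul {E : Type*} [NormedAddCommGroup E] [InnerProductSpace ℝ E]
    {a : E} (ha : a ≠ 0) (c : E) :
    HasDerivAt (fun t : ℝ => ‖a + t • c‖) (⟪a, c⟫ / ‖a‖) 0 := by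
  have h := (((hasDerivAt_id (0 : ℝ)).smul_const c).const_add a).norm_sq.sqrt
    (by simpa using ha)
  simp only [id, zero_smul, add_zero, one_smul, Real.sqrt_sq (norm_nonneg _)] at h
  convert h using 1
  field_simp

section NormSubdifferential

variable {d : ℕ}

lemma sgnE_neg (z : Euc d) : sgnE (-z) = -sgnE z := by
  simp [sgnE]

lemma norm_sgnE_le (z : Euc d) : ‖sgnE z‖ ≤ 1 := by
  rcases eq_or_ne z 0 with rfl | hz
  · simp [sgnE]
  · rw [sgnE, norm_smul, norm_inv, norm_norm, inv_mul_cancel₀ (norm_ne_zero_iff.2 hz)]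

lemma inner_sgnE_self (z : Euc d) : ⟪sgnE z, z⟫ = ‖z‖ := by
  rcases eq_or_ne z 0 with rfl | hz
  · simp [sgnE]
  · rw [sgnE, real_inner_smul_left, real_inner_self_eq_norm_sq]
    field_simp [norm_ne_zero_iff.2 hz]

lemma measurable_sgnE : Measurable (sgnE : Euc d → Euc d) :=
  measurable_norm.inv.smul measurable_id

-- The subdifferential of `‖·‖` at `a`: the pointwise constraints on `w x y` in the theorem
-- say exactly `w x y ∈ normSubdiff (u x - u y)`.
def normSubdiff (a : Euc d) : Set (Euc d) := {w | ‖w‖ ≤ 1 ∧ (a ≠ 0 → w = sgnE a)}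

lemma normSubdiff_zero : normSubdiff (0 : Euc d) = Metric.closedBall 0 1 := by
  ext w
  simp [normSubdiff]

lemma normSubdiff_of_ne_zero {a : Euc d} (ha : a ≠ 0) : normSubdiff a = {sgnE a} := by
  ext w
  simp only [normSubdiff, ne_eq, ha, not_false_eq_true, forall_const, Set.mem_ofPred_eq,
    Set.mem_singleton_iff]
  exact ⟨And.right, fun hw => ⟨hw ▸ norm_sgnE_le a, hw⟩⟩

lemma convex_normSubdiff (a : Euc d) : Convex ℝ (normSubdiff a) := by
  rcases eq_or_ne a 0 with rfl | ha
  · simpa only [normSubdiff_zero] using convex_closedBall _ _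
  · simpa only [normSubdiff_of_ne_zero ha] using convex_singleton _

lemma isClosed_normSubdiff (a : Euc d) : IsClosed (normSubdiff a) := by
  rcases eq_or_ne a 0 with rfl | ha
  · simpa only [normSubdiff_zero] using Metric.isClosed_closedBall
  · simpa only [normSubdiff_of_ne_zero ha] using isClosed_singleton

lemma norm_add_inner_sub_le {a w : Euc d} (hw : w ∈ normSubdiff a) (c : Euc d) :
    ‖a‖ + ⟪w, c - a⟫ ≤ ‖c‖ := by
  have hwa : ⟪w, a⟫ = ‖a‖ := by
    rcases eq_or_ne a 0 with rfl | ha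
    · simp
    · rw [hw.2 ha, inner_sgnE_self]
  have hwc : ⟪w, c⟫ ≤ ‖c‖ :=
    (real_inner_le_norm w c).trans (mul_le_of_le_one_left (norm_nonneg _) hw.1)
  rw [inner_sub_right, hwa]
  linarith

-- The element of `normSubdiff a` that maximises `⟪·, c⟫`.
def normSubgrad (a c : Euc d) : Euc d := if a = 0 then sgnE c else sgnE a

lemma normSubgrad_of_ne_zero {a : Euc d} (ha : a ≠ 0) (c : Euc d) : normSubgrad a c = sgnE a :=
  if_neg ha

lemma normSubgrad_neg_neg (a c : Euc d) : normSubgrad (-a) (-c) = -normSubgrad a c := by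
  simp only [normSubgrad, neg_eq_zero]
  split_ifs <;> exact sgnE_neg _

lemma normSubgrad_sub_comm (a b c e : Euc d) :
    normSubgrad (b - a) (e - c) = -normSubgrad (a - b) (c - e) := by
  rw [← neg_sub a, ← neg_sub c, normSubgrad_neg_neg]

lemma norm_normSubgrad_le (a c : Euc d) : ‖normSubgrad a c‖ ≤ 1 := by
  unfold normSubgrad; split_ifs <;> exact norm_sgnE_le _

lemma measurable_normSubgrad : Measurable (fun q : Euc d × Euc d => normSubgrad q.1 q.2) :=
  Measurable.ite (measurableSet_eq_fun measurable_fst measurable_const)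
    (measurable_sgnE.comp measurable_snd) (measurable_sgnE.comp measurable_fst)

lemma tendsto_slope_norm_add_smul (a c : Euc d) :
    Tendsto (fun t : ℝ => (‖a + t • c‖ - ‖a‖) / t) (𝓝[>] 0) (𝓝 ⟪normSubgrad a c, c⟫) := by
  rcases eq_or_ne a 0 with rfl | ha
  · rw [normSubgrad, if_pos rfl, inner_sgnE_self]
    refine tendsto_const_nhds.congr' (eventually_nhdsWithin_of_forall fun t (ht : 0 < t) => ?_)
    simp [norm_smul, abs_of_pos ht, ht.ne']
  · rw [normSubgrad_of_ne_zero ha, sgnE, real_inner_smul_left, inv_mul_eq_div]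
    refine ((hasDerivAt_norm_add_smul ha c).tendsto_slope_zero_right).congr fun t => ?_
    simp [div_eq_inv_mul]

lemma normSubgrad_mem_normSubdiff (a c : Euc d) : normSubgrad a c ∈ normSubdiff a :=
  ⟨norm_normSubgrad_le a c, fun ha => normSubgrad_of_ne_zero ha c⟩

end NormSubdifferential

section SumOfNorms

variable {d : ℕ} {μ : Measure (Euc d)} [IsFiniteMeasure μ] {lam : ℝ} {u : Euc d → Euc d}

theorem memLp_id_of_compact_support (hsupp : ∃ K : Set (Euc d), IsCompact K ∧ μ Kᶜ = 0)
    (p : ℝ≥0∞) : MemLp (fun x : Euc d => x) p μ := by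
  obtain ⟨K, hK, hKc⟩ := hsupp
  obtain ⟨C, hC⟩ := hK.isBounded.subset_closedBall 0
  refine MemLp.of_bound aestronglyMeasurable_id C ?_
  filter_upwards [measure_eq_zero_iff_ae_notMem.mp hKc] with x hx
  simpa using hC (not_not.mp hx)

theorem integrable_norm_sub_comp_fst_snd {f : Euc d → Euc d} (hf : MemLp f 2 μ) :
    Integrable (fun p : Euc d × Euc d => ‖f p.1 - f p.2‖) (μ.prod μ) :=
  (((hf.comp_fst μ).sub (hf.comp_snd μ)).integrable one_le_two).norm

theorem SONJ_eq_integral_prod {v : Euc d → Euc d} (hv : MemLp v 2 μ) :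
    SONJ μ lam v = ∫ x, ‖v x - x‖ ^ 2 ∂μ + lam * ∫ p, ‖v p.1 - v p.2‖ ∂μ.prod μ := by
  rw [SONJ, integral_integral (f := fun x y => ‖v x - v y‖) (integrable_norm_sub_comp_fst_snd hv)]

theorem integral_norm_sub_add_two_mul_le {v : Euc d → Euc d} {W : Euc d × Euc d → Euc d}
    (hu : MemLp u 2 μ) (hv : MemLp v 2 μ) (hW : AEStronglyMeasurable W (μ.prod μ))
    (hanti : ∀ᵐ p ∂μ.prod μ, W p = -W p.swap)
    (hsub : ∀ᵐ p ∂μ.prod μ, W p ∈ normSubdiff (u p.1 - u p.2)) :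
    ∫ p, ‖u p.1 - u p.2‖ ∂μ.prod μ + 2 * ∫ x, ⟪∫ z, W (x, z) ∂μ, v x - u x⟫ ∂μ
      ≤ ∫ p, ‖v p.1 - v p.2‖ ∂μ.prod μ := by
  have hg := hv.sub hu
  have hbd : ∀ᵐ p ∂μ.prod μ, ‖W p‖ ≤ 1 := hsub.mono fun _ hp => hp.1
  have hWg : Integrable (fun p => ⟪W p, v p.1 - u p.1⟫) (μ.prod μ) :=
    integrable_inner_of_ae_norm_le hW hbd ((hg.comp_fst μ).integrable one_le_two)
  have hWDg : Integrable (fun p => ⟪W p, (v p.1 - u p.1) - (v p.2 - u p.2)⟫) (μ.prod μ) :=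
    integrable_inner_of_ae_norm_le hW hbd
      (((hg.comp_fst μ).sub (hg.comp_snd μ)).integrable one_le_two)
  have hpt : ∀ᵐ p ∂μ.prod μ, ‖u p.1 - u p.2‖ + ⟪W p, (v p.1 - u p.1) - (v p.2 - u p.2)⟫
      ≤ ‖v p.1 - v p.2‖ := by
    filter_upwards [hsub] with p hp
    rw [sub_sub_sub_comm]
    exact norm_add_inner_sub_le hp _
  rw [← integral_inner_comp_fst (g := fun x => v x - u x)
      ((MemLp.of_bound hW 1 hbd).integrable one_le_two) hWg,
    ← integral_inner_sub_eq_two_mul_of_antisymm (g := fun x => v x - u x) hanti hWg,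
    ← integral_add (integrable_norm_sub_comp_fst_snd hu) hWDg]
  exact integral_mono_ae ((integrable_norm_sub_comp_fst_snd hu).add hWDg)
    (integrable_norm_sub_comp_fst_snd hv) hpt

theorem isSONMin_of_kkt (hsupp : ∃ K : Set (Euc d), IsCompact K ∧ μ Kᶜ = 0) (hlam : 0 ≤ lam)
    (hu : MemLp u 2 μ) {w : Euc d → Euc d → Euc d}
    (hw : AEStronglyMeasurable (fun p : Euc d × Euc d => w p.1 p.2) (μ.prod μ))
    (hanti : ∀ᵐ p ∂μ.prod μ, w p.1 p.2 = -w p.2 p.1)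
    (hsgn : ∀ᵐ p ∂μ.prod μ, u p.1 ≠ u p.2 → w p.1 p.2 = sgnE (u p.1 - u p.2))
    (hbd : ∀ᵐ p ∂μ.prod μ, ‖w p.1 p.2‖ ≤ 1)
    (hEL : ∀ᵐ x ∂μ, x - u x = lam • ∫ z, w x z ∂μ) :
    IsSONMin μ lam u := by
  refine ⟨hu, fun v hv => ?_⟩
  have hquad : ∫ x, ‖u x - x‖ ^ 2 ∂μ + 2 * ∫ x, ⟪u x - x, v x - u x⟫ ∂μ
      ≤ ∫ x, ‖v x - x‖ ^ 2 ∂μ := by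
    have h := integral_norm_sq_add_smul (f := fun x => u x - x) (g := fun x => v x - u x)
      (hu.sub (memLp_id_of_compact_support hsupp 2)) (hv.sub hu) 1
    simp only [one_smul, one_mul, sub_add_sub_cancel'] at h
    rw [h]
    linarith [integral_nonneg (μ := μ) (f := fun x => ‖v x - u x‖ ^ 2) fun x => sq_nonneg _]
  have hTV := integral_norm_sub_add_two_mul_le hu hv hw hanti <| by
    filter_upwards [hsgn, hbd] with p hs hb
    exact ⟨hb, fun h => hs (sub_ne_zero.mp h)⟩
  have hEL' : lam * ∫ x, ⟪∫ z, w x z ∂μ, v x - u x⟫ ∂μ = -∫ x, ⟪u x - x, v x - u x⟫ ∂μ := by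
    rw [← integral_const_mul, ← integral_neg]
    refine integral_congr_ae ?_
    filter_upwards [hEL] with x hx
    rw [← real_inner_smul_left, ← hx, ← inner_neg_left, neg_sub]
  rw [SONJ_eq_integral_prod hu, SONJ_eq_integral_prod hv]
  nlinarith [mul_le_mul_of_nonneg_left hTV hlam]

end SumOfNorms

section FirstVariation

theorem tendsto_integral_slope_norm_add_smul {α : Type*} [MeasurableSpace α] {ν : Measure α}
    {d : ℕ} {F G : α → Euc d} (hF : AEStronglyMeasurable F ν) (hG : Integrable G ν) :
    Tendsto (fun t : ℝ => ∫ a, (‖F a + t • G a‖ - ‖F a‖) / t ∂ν) (𝓝[>] 0)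
      (𝓝 (∫ a, ⟪normSubgrad (F a) (G a), G a⟫ ∂ν)) := by
  refine tendsto_integral_filter_of_dominated_convergence (fun a => ‖G a‖)
    (Eventually.of_forall fun t => (((hF.add (hG.1.const_smul t)).norm.sub hF.norm).aemeasurable
      |>.div_const t).aestronglyMeasurable)
    (eventually_nhdsWithin_of_forall fun t (ht : 0 < t) => Eventually.of_forall fun a => ?_)
    hG.norm (Eventually.of_forall fun a => tendsto_slope_norm_add_smul (F a) (G a))
  rw [norm_div, Real.norm_of_nonneg ht.le, div_le_iff₀ ht]
  calc ‖‖F a + t • G a‖ - ‖F a‖‖ ≤ ‖t • G a‖ := by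
        simpa using abs_norm_sub_norm_le (F a + t • G a) (F a)
    _ = ‖G a‖ * t := by rw [norm_smul, Real.norm_of_nonneg ht.le, mul_comm]

variable {d : ℕ} {μ : Measure (Euc d)} [IsFiniteMeasure μ] {lam : ℝ} {u h : Euc d → Euc d}

theorem SONJ_add_smul_sub (hsupp : ∃ K : Set (Euc d), IsCompact K ∧ μ Kᶜ = 0)
    (hu : MemLp u 2 μ) (hh : MemLp h 2 μ) (t : ℝ) :
    SONJ μ lam (fun x => u x + t • h x) - SONJ μ lam u
      = t * (2 * ∫ x, ⟪u x - x, h x⟫ ∂μ + t * ∫ x, ‖h x‖ ^ 2 ∂μ)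
        + lam * ∫ p, (‖(u p.1 - u p.2) + t • (h p.1 - h p.2)‖ - ‖u p.1 - u p.2‖) ∂μ.prod μ := by
  have hid := memLp_id_of_compact_support hsupp 2
  have hv : MemLp (fun x => u x + t • h x) 2 μ := hu.add (hh.const_smul t)
  have hvx : ∀ x, u x + t • h x - x = (u x - x) + t • h x := fun x => by abel
  have hvp : ∀ p : Euc d × Euc d, (u p.1 + t • h p.1) - (u p.2 + t • h p.2)
      = (u p.1 - u p.2) + t • (h p.1 - h p.2) := fun p => by rw [smul_sub]; abel
  have hint : Integrable (fun p : Euc d × Euc d => ‖(u p.1 - u p.2) + t • (h p.1 - h p.2)‖)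
      (μ.prod μ) := by
    simpa only [hvp] using integrable_norm_sub_comp_fst_snd hv
  rw [SONJ_eq_integral_prod hv, SONJ_eq_integral_prod hu, integral_sub hint
    (integrable_norm_sub_comp_fst_snd hu)]
  simp only [hvx, hvp]
  rw [integral_norm_sq_add_smul (f := fun x => u x - x) (hu.sub hid) hh]
  ring

theorem tendsto_slope_SONJ (hsupp : ∃ K : Set (Euc d), IsCompact K ∧ μ Kᶜ = 0)
    (hu : MemLp u 2 μ) (hh : MemLp h 2 μ) :
    Tendsto (fun t => (SONJ μ lam (fun x => u x + t • h x) - SONJ μ lam u) / t) (𝓝[>] 0)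
      (𝓝 (2 * ∫ x, ⟪u x - x, h x⟫ ∂μ + lam * ∫ p, ⟪normSubgrad (u p.1 - u p.2) (h p.1 - h p.2),
        h p.1 - h p.2⟫ ∂μ.prod μ)) := by
  have hTV := tendsto_integral_slope_norm_add_smul (F := fun p : Euc d × Euc d => u p.1 - u p.2)
    (G := fun p => h p.1 - h p.2)
    (hu.1.comp_fst.sub hu.1.comp_snd) (((hh.comp_fst μ).sub (hh.comp_snd μ)).integrable one_le_two)
  have ht0 : Tendsto (fun t : ℝ => t) (𝓝[>] 0) (𝓝 0) := nhdsWithin_le_nhds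
  have hlim := (tendsto_const_nhds (x := 2 * ∫ x, ⟪u x - x, h x⟫ ∂μ)).add
    ((ht0.mul_const (∫ x, ‖h x‖ ^ 2 ∂μ)).add (hTV.const_mul lam))
  rw [zero_mul, zero_add] at hlim
  refine hlim.congr' ?_
  filter_upwards [self_mem_nhdsWithin] with t (ht : 0 < t)
  rw [SONJ_add_smul_sub hsupp hu hh t, integral_div]
  field_simp
  ring

theorem integral_inner_le_of_isSONMin (hsupp : ∃ K : Set (Euc d), IsCompact K ∧ μ Kᶜ = 0)
    (hmin : IsSONMin μ lam u) (hh : MemLp h 2 μ) :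
    ∫ x, ⟪x - u x, h x⟫ ∂μ ≤ lam / 2 * ∫ p, ⟪normSubgrad (u p.1 - u p.2) (h p.1 - h p.2),
      h p.1 - h p.2⟫ ∂μ.prod μ := by
  have hslope := ge_of_tendsto (tendsto_slope_SONJ hsupp hmin.1 hh)
    (eventually_nhdsWithin_of_forall fun t (ht : 0 < t) =>
      div_nonneg (sub_nonneg.2 (hmin.2 _ (hmin.1.add (hh.const_smul t)))) ht.le)
  have hneg : ∫ x, ⟪x - u x, h x⟫ ∂μ = -∫ x, ⟪u x - x, h x⟫ ∂μ := by
    rw [← integral_neg]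
    simp only [← inner_neg_left, neg_sub]
  linarith

end FirstVariation

section KKTMultipliers

variable {d : ℕ} {μ : Measure (Euc d)} [IsFiniteMeasure μ] {lam : ℝ} {u : Euc d → Euc d}

-- Antisymmetry is stated as `W ∘ swap = -W` in `L²`, which makes the set visibly closed and
-- convex.
def kktMultipliers (μ : Measure (Euc d)) [IsFiniteMeasure μ] (u : Euc d → Euc d) :
    Set (Lp (Euc d) 2 (μ.prod μ)) :=
  {W | Lp.compMeasurePreservingₗᵢ ℝ Prod.swap Measure.measurePreserving_swap W = -W} ∩
    {W | ∀ᵐ p ∂μ.prod μ, W p ∈ normSubdiff (u p.1 - u p.2)}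

lemma convex_kktMultipliers : Convex ℝ (kktMultipliers μ u) := by
  refine Convex.inter (fun W hW W' hW' a b _ _ _ => ?_)
    (Lp.convex_setOf_ae_mem fun _ => convex_normSubdiff _)
  simp only [Set.mem_ofPred_eq, map_add, map_smul] at hW hW' ⊢
  rw [hW, hW', smul_neg, smul_neg, neg_add]

lemma isClosed_kktMultipliers : IsClosed (kktMultipliers μ u) :=
  (isClosed_eq (LinearIsometry.continuous _) continuous_neg).inter
    (Lp.isClosed_setOf_ae_mem fun _ => isClosed_normSubdiff _)

lemma ae_mem_normSubdiff_of_mem_kktMultipliers {W : Lp (Euc d) 2 (μ.prod μ)}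
    (hW : W ∈ kktMultipliers μ u) : ∀ᵐ p ∂μ.prod μ, W p ∈ normSubdiff (u p.1 - u p.2) :=
  hW.2

lemma isBounded_kktMultipliers : Bornology.IsBounded (kktMultipliers μ u) :=
  isBounded_iff_forall_norm_le.2 ⟨_, fun _ hW => Lp.norm_le_of_ae_bound zero_le_one
    ((ae_mem_normSubdiff_of_mem_kktMultipliers hW).mono fun _ hp => hp.1)⟩

lemma ae_eq_neg_swap_of_mem_kktMultipliers {W : Lp (Euc d) 2 (μ.prod μ)}
    (hW : W ∈ kktMultipliers μ u) : ∀ᵐ p ∂μ.prod μ, W p = -W p.swap := by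
  have hanti : Lp.compMeasurePreserving Prod.swap Measure.measurePreserving_swap W = -W := hW.1
  have hswap := Lp.coeFn_compMeasurePreserving W Measure.measurePreserving_swap
  rw [hanti] at hswap
  filter_upwards [hswap, Lp.coeFn_neg W] with p hsp hneg
  rw [hneg, Pi.neg_apply, Function.comp_apply] at hsp
  rw [← hsp, neg_neg]

lemma memLp_normSubgrad {h : Euc d → Euc d} (hu : AEStronglyMeasurable u μ)
    (hh : AEStronglyMeasurable h μ) :
    MemLp (fun p : Euc d × Euc d => normSubgrad (u p.1 - u p.2) (h p.1 - h p.2)) 2 (μ.prod μ) :=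
  MemLp.of_bound (measurable_normSubgrad.comp_aemeasurable
      ((hu.comp_fst.sub hu.comp_snd).aemeasurable.prodMk
        (hh.comp_fst.sub hh.comp_snd).aemeasurable)).aestronglyMeasurable
    1 (ae_of_all _ fun _ => norm_normSubgrad_le _ _)

lemma toLp_normSubgrad_mem_kktMultipliers {h : Euc d → Euc d} (hu : AEStronglyMeasurable u μ)
    (hh : AEStronglyMeasurable h μ) : (memLp_normSubgrad hu hh).toLp ∈ kktMultipliers μ u := by
  set W := (memLp_normSubgrad hu hh).toLp
  have hcoe := (memLp_normSubgrad hu hh).coeFn_toLp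
  refine ⟨Lp.ext ?_, ?_⟩
  · filter_upwards [Lp.coeFn_compMeasurePreserving W Measure.measurePreserving_swap,
      Measure.measurePreserving_swap.quasiMeasurePreserving.ae_eq hcoe, Lp.coeFn_neg W, hcoe]
      with p hsp hswap hneg hp
    calc (Lp.compMeasurePreservingₗᵢ ℝ Prod.swap _ W : Euc d × Euc d → Euc d) p = W p.swap := hsp
      _ = normSubgrad (u p.2 - u p.1) (h p.2 - h p.1) := hswap
      _ = -W p := by rw [normSubgrad_sub_comm, hp]
      _ = (-W : Lp (Euc d) 2 (μ.prod μ)) p := hneg.symm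
  · filter_upwards [hcoe] with p hp
    rw [hp]
    exact normSubgrad_mem_normSubdiff _ _

end KKTMultipliers

section Necessity

variable {d : ℕ} {μ : Measure (Euc d)} [IsFiniteMeasure μ] {lam : ℝ} {u : Euc d → Euc d}

theorem exists_mem_kktMultipliers_inner_le (hsupp : ∃ K : Set (Euc d), IsCompact K ∧ μ Kᶜ = 0)
    (hmin : IsSONMin μ lam u) {b : Lp (Euc d) 2 μ} (hb : b =ᵐ[μ] fun x => x - u x)
    (h : Lp (Euc d) 2 μ) :
    ∃ W ∈ kktMultipliers μ u, ⟪b, h⟫ ≤ ⟪(lam • (Lp.compFst μ μ).adjoint) W, h⟫ := by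
  set f := fun p : Euc d × Euc d => normSubgrad (u p.1 - u p.2) (h p.1 - h p.2)
  have hf := memLp_normSubgrad hmin.1.1 (Lp.aestronglyMeasurable h)
  have hfh : Integrable (fun p => ⟪f p, h p.1⟫) (μ.prod μ) :=
    integrable_inner_of_ae_norm_le hf.1 (ae_of_all _ fun _ => norm_normSubgrad_le _ _)
      (((Lp.memLp h).comp_fst μ).integrable one_le_two)
  have hanti : ∀ᵐ p ∂μ.prod μ, f p = -f p.swap :=
    ae_of_all _ fun p => by rw [show f p.swap = -f p from normSubgrad_sub_comm _ _ _ _, neg_neg]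
  refine ⟨hf.toLp, toLp_normSubgrad_mem_kktMultipliers hmin.1.1 (Lp.aestronglyMeasurable h), ?_⟩
  calc ⟪b, h⟫ = ∫ x, ⟪x - u x, h x⟫ ∂μ := by
        rw [L2.inner_def]
        refine integral_congr_ae ?_
        filter_upwards [hb] with x hx
        rw [hx]
    _ ≤ lam / 2 * ∫ p, ⟪f p, h p.1 - h p.2⟫ ∂μ.prod μ :=
        integral_inner_le_of_isSONMin hsupp hmin (Lp.memLp h)
    _ = lam * ∫ p, ⟪f p, h p.1⟫ ∂μ.prod μ := by
        rw [integral_inner_sub_eq_two_mul_of_antisymm hanti hfh]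
        ring
    _ = ⟪(lam • (Lp.compFst μ μ).adjoint) hf.toLp, h⟫ := by
        rw [smul_apply, real_inner_smul_left,
          ContinuousLinearMap.adjoint_inner_left, L2.inner_def]
        congr 1
        refine integral_congr_ae ?_
        filter_upwards [hf.coeFn_toLp, Lp.coeFn_compFst h] with p hfp hhp
        rw [hfp, hhp]

theorem exists_kktMultiplier_of_isSONMin (hsupp : ∃ K : Set (Euc d), IsCompact K ∧ μ Kᶜ = 0)
    (hmin : IsSONMin μ lam u) :
    ∃ W ∈ kktMultipliers μ u, ∀ᵐ x ∂μ, x - u x = lam • ∫ z, W (x, z) ∂μ := by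
  have hb : MemLp (fun x => x - u x) 2 μ := (memLp_id_of_compact_support hsupp 2).sub hmin.1
  -- `T W = λ ∫ W (·, z) dμ(z)` for bounded `W`, by `Lp.adjoint_compFst_ae_eq`.
  let T : Lp (Euc d) 2 (μ.prod μ) →L[ℝ] Lp (Euc d) 2 μ := lam • (Lp.compFst μ μ).adjoint
  obtain ⟨W, hW, hTW⟩ := T.mem_image_of_forall_exists_inner_le (b := hb.toLp)
    convex_kktMultipliers isClosed_kktMultipliers isBounded_kktMultipliers
    (exists_mem_kktMultipliers_inner_le hsupp hmin hb.coeFn_toLp)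
  refine ⟨W, hW, ?_⟩
  have hT := Lp.adjoint_compFst_ae_eq W
    ((ae_mem_normSubdiff_of_mem_kktMultipliers hW).mono fun _ hp => hp.1)
  filter_upwards [hb.coeFn_toLp, Lp.coeFn_smul lam ((Lp.compFst μ μ).adjoint W), hT]
    with x hbx hsx hTx
  rw [← hbx, ← hTW, smul_apply, hsx, Pi.smul_apply, hTx]

end Necessity

theorem stmt8_general
    (d : ℕ) (μ : Measure (Euc d)) [IsFiniteMeasure μ]
    (hsupp : ∃ K : Set (Euc d), IsCompact K ∧ μ Kᶜ = 0)
    (lam : ℝ) (hlam : 0 ≤ lam)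
    (u : Euc d → Euc d) (hu2 : MemLp u 2 μ) :
    IsSONMin μ lam u ↔
      ∃ w : Euc d → Euc d → Euc d,
        AEStronglyMeasurable (fun p : Euc d × Euc d => w p.1 p.2) (μ.prod μ) ∧
        (∀ᵐ p ∂μ.prod μ, w p.1 p.2 = -w p.2 p.1) ∧
        (∀ᵐ p ∂μ.prod μ, u p.1 ≠ u p.2 → w p.1 p.2 = sgnE (u p.1 - u p.2)) ∧
        (∀ᵐ p ∂μ.prod μ, ‖w p.1 p.2‖ ≤ 1) ∧
        (∀ᵐ x ∂μ, x - u x = lam • ∫ z, w x z ∂μ) := by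
  refine ⟨fun hmin => ?_, fun ⟨w, hw, hanti, hsgn, hbd, hEL⟩ =>
    isSONMin_of_kkt hsupp hlam hu2 hw hanti hsgn hbd hEL⟩
  obtain ⟨W, hW, hEL⟩ := exists_kktMultiplier_of_isSONMin hsupp hmin
  have hsub := ae_mem_normSubdiff_of_mem_kktMultipliers hW
  exact ⟨fun x y => W (x, y), Lp.aestronglyMeasurable W, ae_eq_neg_swap_of_mem_kktMultipliers hW,
    hsub.mono fun _ hp hne => hp.2 (sub_ne_zero.2 hne), hsub.mono fun _ hp => hp.1, hEL⟩

/-- **Theorem (KKT characterization of the minimizer).**  `u ∈ L²(μ;ℝ^d)` is the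
minimizer `u_{μ,λ}` if and only if there is a `μ⊗μ`-a.e. antisymmetric
`w ∈ L^∞(μ⊗μ;ℝ^d)` with `|w| ≤ 1`, `w(x,y) = sgn(u x - u y)` whenever `u x ≠ u y`,
and `x - u x = λ ∫ w(x,z) dμ(z)` for `μ`-a.e. `x`. -/
theorem stmt8
    (d : ℕ) (μ : Measure (Euc d)) [IsFiniteMeasure μ] (hμ0 : μ ≠ 0)
    (hsupp : ∃ K : Set (Euc d), IsCompact K ∧ μ Kᶜ = 0)
    (lam : ℝ) (hlam : 0 ≤ lam)
    (u : Euc d → Euc d) (hu2 : MemLp u 2 μ) :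
    IsSONMin μ lam u ↔
      ∃ w : Euc d → Euc d → Euc d,
        AEStronglyMeasurable (fun p : Euc d × Euc d => w p.1 p.2) (μ.prod μ) ∧
        (∀ᵐ p ∂μ.prod μ, w p.1 p.2 = -w p.2 p.1) ∧
        (∀ᵐ p ∂μ.prod μ, u p.1 ≠ u p.2 → w p.1 p.2 = sgnE (u p.1 - u p.2)) ∧
        (∀ᵐ p ∂μ.prod μ, ‖w p.1 p.2‖ ≤ 1) ∧
        (∀ᵐ x ∂μ, x - u x = lam • ∫ z, w x z ∂μ) :=
  stmt8_general d μ hsupp lam hlam u hu2
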